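/- arXiv:1811.06489 — 2 statements merged into one kernel-verified Lean document; each statement's English description precedes it below -/
import Mathlib

section
/- Let P be a strongly linked tree forcing: whenever S, T ∈ P with stem(T) ⊑ stem(S) and stem(S) ∈ T, there is R ∈ P with R ⊆ S ∩ T. Then for every T ∈ P, every branch x ∈ [T] is an I_P-shift density point of [T]; that is, D_{I_P}([T]) = [T]. -/
open Set

noncomputable section

/-- The restriction `x↾n` of `x : ℕ → α` to its first `n` values, as a list. -/
def res {α : Type*} (x : ℕ → α) (n : ℕ) : List α := List.ofFn (fun i : Fin n => x i)

/-- A (set-theoretic) tree on `α`: a collection of finite sequences closed under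
initial segments. -/
def IsTree {α : Type*} (T : Set (List α)) : Prop :=
  ∀ s ∈ T, ∀ t : List α, t <+: s → t ∈ T

/-- The set `[T]` of branches of a tree `T`. -/
def branches {α : Type*} (T : Set (List α)) : Set (ℕ → α) :=
  {x | ∀ n : ℕ, res x n ∈ T}

/-- A perfect tree: a nonempty tree with a splitting node above every node. -/
def IsPerfectTree {α : Type*} (T : Set (List α)) : Prop :=
  IsTree T ∧ T.Nonempty ∧
    ∀ s ∈ T, ∃ t ∈ T, s <+: t ∧ ∃ a b : α, a ≠ b ∧ t ++ [a] ∈ T ∧ t ++ [b] ∈ T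

/-- A tree forcing: a collection of perfect trees containing the full tree and closed
under restriction `T ↦ T_u`. -/
def IsTreeForcing {α : Type*} (P : Set (Set (List α))) : Prop :=
  (∀ T ∈ P, IsPerfectTree T) ∧ Set.univ ∈ P ∧
    ∀ T ∈ P, ∀ u ∈ T, {t ∈ T | u <+: t ∨ t <+: u} ∈ P

/-- `A` is `P`-nowhere dense. -/
def PNwd {α : Type*} (P : Set (Set (List α))) (A : Set (ℕ → α)) : Prop :=
  ∀ T ∈ P, ∃ S ∈ P, S ⊆ T ∧ branches S ∩ A = ∅

/-- `A` belongs to the σ-ideal `I_P` generated by the `P`-nowhere dense sets. -/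
def PIdeal {α : Type*} (P : Set (Set (List α))) (A : Set (ℕ → α)) : Prop :=
  ∃ f : ℕ → Set (ℕ → α), (∀ n, PNwd P (f n)) ∧ A ⊆ ⋃ n, f n

/-- `A` belongs to the auxiliary ideal `I*_P`. -/
def PIstar {α : Type*} (P : Set (Set (List α))) (A : Set (ℕ → α)) : Prop :=
  ∀ T ∈ P, ∃ S ∈ P, S ⊆ T ∧ PIdeal P (branches S ∩ A)

/-- `A` is `P`-measurable. -/
def PMeasurable {α : Type*} (P : Set (Set (List α))) (A : Set (ℕ → α)) : Prop :=
  ∀ T ∈ P, ∃ S ∈ P, S ⊆ T ∧ (PIdeal P (branches S \ A) ∨ PIdeal P (branches S ∩ A))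

/-- Compatibility of two conditions in the tree forcing `P`. -/
def Compat {α : Type*} (P : Set (Set (List α))) (S T : Set (List α)) : Prop :=
  ∃ R ∈ P, R ⊆ S ∧ R ⊆ T

/-- `D` is an antichain in the tree forcing `P`. -/
def IsAntichainIn {α : Type*} (P D : Set (Set (List α))) : Prop :=
  D ⊆ P ∧ ∀ S ∈ D, ∀ T ∈ D, S ≠ T → ¬ Compat P S T

/-- `D` is a maximal antichain in the tree forcing `P`. -/
def IsMaxAntichainIn {α : Type*} (P D : Set (Set (List α))) : Prop :=
  IsAntichainIn P D ∧ ∀ T ∈ P, ∃ S ∈ D, Compat P S T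

/-- `s` is the stem of the tree `T`: the longest node comparable with all nodes of `T`. -/
def IsStem {α : Type*} (T : Set (List α)) (s : List α) : Prop :=
  s ∈ T ∧ (∀ t ∈ T, s <+: t ∨ t <+: s) ∧
    ∀ s' ∈ T, (∀ t ∈ T, s' <+: t ∨ t <+: s') → s'.length ≤ s.length

/-- `P` is strongly linked: any `S, T ∈ P` with `stem(T) ⊑ stem(S)` and `stem(S) ∈ T`
have a common refinement `R ∈ P` with `R ⊆ S ∩ T`. -/
def StronglyLinked {α : Type*} (P : Set (Set (List α))) : Prop :=
  ∀ S ∈ P, ∀ T ∈ P, ∀ sS sT : List α, IsStem S sS → IsStem T sT →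
    sT <+: sS → sS ∈ T → ∃ R ∈ P, R ⊆ S ∩ T

/-!
A branch `x` of `T` is a density point because every `S ∈ P` with stem `x↾n`, once `n` is
at least the length of the stem of `T`, is compatible with `T` by strong linkedness, and
`[R] ∉ I_P` for every `R ∈ P` (a fusion argument, the Baire category theorem for `P`).
Conversely, if `x↾k ∉ T`, the cone above `x↾n` for large `n` is a condition with stem `x↾n`
whose branches miss `[T]`.
-/

section ShiftDensity

variable {α : Type*}

lemma length_res (x : ℕ → α) (n : ℕ) : (res x n).length = n := by simp [res]

lemma res_prefix_res (x : ℕ → α) {m n : ℕ} (h : m ≤ n) : res x m <+: res x n := by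
  rw [List.prefix_iff_eq_take]
  apply List.ext_getElem (by simp [length_res, h])
  intro i _ _
  simp [res]

lemma exists_res_prefix_of_chain (u : ℕ → List α) (hchain : ∀ n, u n <+: u (n + 1))
    (hlen : ∀ n, n ≤ (u n).length) : ∃ x : ℕ → α, ∀ n, res x n <+: u n := by
  have hmono : ∀ {i j}, i ≤ j → u i <+: u j := fun {i j} h =>
    Nat.le_induction (List.prefix_refl _) (fun j _ ih => ih.trans (hchain j)) j h
  refine ⟨fun k => (u (k + 1))[k]'(hlen (k + 1)), fun n => ?_⟩
  rw [List.prefix_iff_eq_take]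
  apply List.ext_getElem (by simp [length_res, hlen n])
  intro i hi _
  rw [length_res] at hi
  simp [res, (hmono (Nat.succ_le_of_lt hi)).getElem]

lemma branches_mono {S T : Set (List α)} (h : S ⊆ T) : branches S ⊆ branches T :=
  fun _ hx n => h (hx n)

lemma branches_inter (S T : Set (List α)) : branches (S ∩ T) = branches S ∩ branches T :=
  Set.ext fun _ => forall_and

lemma PIdeal.mono {P : Set (Set (List α))} {A B : Set (ℕ → α)} (hA : PIdeal P A) (h : B ⊆ A) :
    PIdeal P B :=
  let ⟨f, hf, hAf⟩ := hA
  ⟨f, hf, h.trans hAf⟩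

lemma PIdeal.empty (P : Set (Set (List α))) : PIdeal P (∅ : Set (ℕ → α)) :=
  ⟨fun _ => ∅, fun _ T hT => ⟨T, hT, Subset.rfl, inter_empty _⟩, empty_subset _⟩

section PerfectTree

variable {T : Set (List α)}

lemma IsPerfectTree.nil_mem (hT : IsPerfectTree T) : [] ∈ T :=
  let ⟨t, ht⟩ := hT.2.1
  hT.1 t ht [] t.nil_prefix

lemma IsPerfectTree.exists_length_le (hT : IsPerfectTree T) (N : ℕ) :
    ∃ t ∈ T, N ≤ t.length := by
  induction N with
  | zero => exact ⟨[], hT.nil_mem, le_rfl⟩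
  | succ N ih =>
    obtain ⟨t, ht, hN⟩ := ih
    obtain ⟨t', -, htt', a, -, -, ha, -⟩ := hT.2.2 t ht
    exact ⟨t' ++ [a], ha, by simp; have := htt'.length_le; omega⟩

lemma length_le_of_forall_comparable {s t : List α} {a b : α} (hab : a ≠ b)
    (ha : t ++ [a] ∈ T) (hb : t ++ [b] ∈ T) (hs : ∀ r ∈ T, s <+: r ∨ r <+: s) :
    s.length ≤ t.length := by
  by_contra! hlt
  have below : ∀ c, t ++ [c] ∈ T → t ++ [c] <+: s := fun c hc =>
    (hs _ hc).elim (fun h => by rw [h.eq_of_length_le (by simp; omega)]) id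
  have := (List.prefix_of_prefix_length_le (below a ha) (below b hb) (by simp)).eq_of_length
    (by simp)
  exact hab (by simpa using this)

lemma IsPerfectTree.exists_isStem (hT : IsPerfectTree T) : ∃ s, IsStem T s := by
  obtain ⟨t, -, -, a, b, hab, ha, hb⟩ := hT.2.2 [] hT.nil_mem
  set C := {s | s ∈ T ∧ ∀ r ∈ T, s <+: r ∨ r <+: s}
  have hbdd : BddAbove (List.length '' C) := by
    refine ⟨t.length, ?_⟩
    rintro _ ⟨s, hs, rfl⟩
    exact length_le_of_forall_comparable hab ha hb hs.2
  have hne : (List.length '' C).Nonempty :=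
    ⟨0, [], ⟨hT.nil_mem, fun r _ => Or.inl r.nil_prefix⟩, rfl⟩
  obtain ⟨s, ⟨hsT, hs⟩, hlen⟩ := Nat.sSup_mem hne hbdd
  exact ⟨s, hsT, hs, fun s' hs'T hs' => hlen ▸ le_csSup hbdd ⟨s', ⟨hs'T, hs'⟩, rfl⟩⟩

lemma IsStem.prefix_of_mem {s t : List α} (hs : IsStem T s) (ht : t ∈ T)
    (hlen : s.length ≤ t.length) : s <+: t :=
  (hs.2.1 t ht).elim id fun h => by rw [h.eq_of_length_le hlen]

end PerfectTree

def cone (u : List α) : Set (List α) := {t | u <+: t ∨ t <+: u}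

lemma isStem_cone [Nontrivial α] (u : List α) : IsStem (cone u) u := by
  obtain ⟨a, b, hab⟩ := exists_pair_ne α
  exact ⟨Or.inl (List.prefix_refl u), fun _ ht => ht, fun _ _ hs =>
    length_le_of_forall_comparable hab (Or.inl (List.prefix_append u [a]))
      (Or.inl (List.prefix_append u [b])) hs⟩

lemma branches_cone_inter_eq_empty {T : Set (List α)} {u : List α} (hu : u ∉ T) :
    branches (cone u) ∩ branches T = ∅ := by
  refine eq_empty_of_forall_notMem fun y ⟨hyu, hyT⟩ => hu ?_
  have hlen : (res y u.length).length = u.length := length_res y _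
  rcases hyu u.length with h | h
  · exact h.eq_of_length hlen.symm ▸ hyT _
  · exact h.eq_of_length hlen ▸ hyT _

namespace IsTreeForcing

variable {P : Set (Set (List α))}

lemma nontrivial (hP : IsTreeForcing P) : Nontrivial α :=
  let ⟨_, _, _, a, b, hab, _⟩ := (hP.1 _ hP.2.1).2.2 [] trivial
  ⟨a, b, hab⟩

lemma cone_mem (hP : IsTreeForcing P) (u : List α) : cone u ∈ P := by
  simpa [cone] using hP.2.2 univ hP.2.1 u trivial

lemma exists_extension_of_pNwd (hP : IsTreeForcing P) {A : Set (ℕ → α)} (hA : PNwd P A)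
    {R : Set (List α)} (hR : R ∈ P) {u : List α} (hu : u ∈ R) (N : ℕ) :
    ∃ R' ∈ P, ∃ u' ∈ R', R' ⊆ R ∧ u <+: u' ∧ N ≤ u'.length ∧ branches R' ∩ A = ∅ := by
  obtain ⟨S, hS, hSR, hSA⟩ := hA _ (hP.2.2 R hR u hu)
  obtain ⟨t, ht, hlen⟩ := (hP.1 S hS).exists_length_le (max N u.length)
  refine ⟨S, hS, t, ht, fun r hr => (hSR hr).1, ?_, le_of_max_le_left hlen, hSA⟩
  exact (hSR ht).2.elim id fun h => by rw [h.eq_of_length_le (le_of_max_le_right hlen)]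

theorem not_pIdeal_branches (hP : IsTreeForcing P) {R : Set (List α)} (hR : R ∈ P) :
    ¬ PIdeal P (branches R) := by
  rintro ⟨A, hA, hRA⟩
  -- fusion: conditions `R_n` with nodes `u_n ∈ R_n` of length `≥ n`, `[R_{n+1}]` missing `A n`
  let Q := {p : Set (List α) × List α // p.1 ∈ P ∧ p.2 ∈ p.1}
  have step : ∀ (n : ℕ) (q : Q), ∃ q' : Q, q'.1.1 ⊆ q.1.1 ∧ q.1.2 <+: q'.1.2 ∧
      n + 1 ≤ q'.1.2.length ∧ branches q'.1.1 ∩ A n = ∅ := fun n q => by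
    obtain ⟨R', hR', u', hu', h⟩ := hP.exists_extension_of_pNwd (hA n) q.2.1 q.2.2 (n + 1)
    exact ⟨⟨(R', u'), hR', hu'⟩, h⟩
  choose next hnext using step
  let q : ℕ → Q := fun n => Nat.rec ⟨(R, []), hR, (hP.1 R hR).nil_mem⟩ next n
  have hanti : Antitone fun n => (q n).1.1 := antitone_nat_of_succ_le fun n => (hnext n (q n)).1
  obtain ⟨x, hx⟩ := exists_res_prefix_of_chain (fun n => (q n).1.2)
    (fun n => (hnext n (q n)).2.1) fun n => by
      cases n with
      | zero => exact le_rfl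
      | succ n => exact (hnext n (q n)).2.2.1
  have hxq : ∀ k, x ∈ branches (q k).1.1 := fun k n =>
    (hP.1 _ (q k).2.1).1 _ (hanti (le_max_right n k) (q (max n k)).2.2) _
      ((res_prefix_res x (le_max_left n k)).trans (hx _))
  obtain ⟨n, hxn⟩ := mem_iUnion.mp (hRA (hxq 0))
  exact (eq_empty_iff_forall_notMem.mp (hnext n (q n)).2.2.2 x) ⟨hxq (n + 1), hxn⟩

end IsTreeForcing

/-- The paper's shifted sets `σ_{x↾n}(B)`, `B ∈ L`, are modelled as the sets `[S]` of the
conditions `S ∈ P` with stem `x↾n`. -/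
def IsShiftDensityPoint (P : Set (Set (List α))) (A : Set (ℕ → α)) (x : ℕ → α) : Prop :=
  ∃ m : ℕ, ∀ n ≥ m, ∀ S ∈ P, IsStem S (res x n) → ¬ PIdeal P (branches S ∩ A)

section DensityPoint

variable {P : Set (Set (List α))} {T : Set (List α)} {x : ℕ → α}

lemma mem_branches_of_isShiftDensityPoint (hP : IsTreeForcing P) (hT : IsTree T)
    (hx : IsShiftDensityPoint P (branches T) x) : x ∈ branches T := by
  have := hP.nontrivial
  obtain ⟨m, hm⟩ := hx
  intro k
  by_contra hk
  have hu : res x (max m k) ∉ T := fun h => hk (hT _ h _ (res_prefix_res x (le_max_right m k)))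
  refine hm _ (le_max_left m k) _ (hP.cone_mem _) (isStem_cone _) ?_
  rw [branches_cone_inter_eq_empty hu]
  exact PIdeal.empty P

lemma isShiftDensityPoint_of_mem_branches (hP : IsTreeForcing P) (hSL : StronglyLinked P)
    (hT : T ∈ P) (hx : x ∈ branches T) : IsShiftDensityPoint P (branches T) x := by
  obtain ⟨sT, hsT⟩ := (hP.1 T hT).exists_isStem
  refine ⟨sT.length, fun n hn S hS hS_stem hI => ?_⟩
  have hpre : sT <+: res x n := hsT.prefix_of_mem (hx n) (by rwa [length_res])
  obtain ⟨R, hR, hRST⟩ := hSL S hS T hT _ sT hS_stem hsT hpre (hx n)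
  exact hP.not_pIdeal_branches hR (hI.mono (branches_inter S T ▸ branches_mono hRST))

end DensityPoint

end ShiftDensity

/-- If `P` is a strongly linked tree forcing, then for every `T ∈ P` the set of
`I_P`-shift density points of `[T]` (in the sense that for all large `n`, every `S ∈ P`
with stem `x↾n` satisfies `[S] ∩ [T] ∉ I_P`) is exactly `[T]`. -/
theorem stmt12 {α : Type*} (P : Set (Set (List α))) (hP : IsTreeForcing P)
    (hSL : StronglyLinked P) (T : Set (List α)) (hT : T ∈ P) :
    {x : ℕ → α | ∃ m : ℕ, ∀ n ≥ m, ∀ S ∈ P, IsStem S (res x n) →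
      ¬ PIdeal P (branches S ∩ branches T)} = branches T :=
  Set.ext fun _ => ⟨mem_branches_of_isShiftDensityPoint hP (hP.1 T hT).1,
    isShiftDensityPoint_of_mem_branches hP hSL hT⟩
end
end

section
/- For every tree T ⊆ 2^{<ω} with μ([T]) > 0 and every rational q ∈ (0,1), there is a perfect subtree S ⊆ T such that every branch of S is a Lebesgue density point of [T] (indeed lim_n μ([T]∩N_{x↾n})/μ(N_{x↾n}) = 1 for each x ∈ [S]) and μ([S]) ≥ q·μ([T]). -/
open MeasureTheory Filter Set
open scoped ENNReal

noncomputable section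

/-- The basic clopen cylinder `N_s` of all extensions of the finite string `s`. -/
def Cyl {α : Type*} (s : List α) : Set (ℕ → α) := {x | res x s.length = s}

/-- The level `Lev_{|t|+i}(T_t)` of the restricted tree `T_t` at height `|t| + i`. -/
def lev (T : Set (List Bool)) (t : List Bool) (i : ℕ) : Set (List Bool) :=
  {u | u ∈ T ∧ t <+: u ∧ u.length = t.length + i}

/-- The weight `w_t = μ([T] ∩ N_t) / μ(N_t)` of the node `t` in the tree `T`. -/
def wt (μ : Measure (ℕ → Bool)) (T : Set (List Bool)) (t : List Bool) : ℝ≥0∞ :=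
  μ (branches T ∩ Cyl t) / μ (Cyl t)

@[simp] lemma res_length {α : Type*} (x : ℕ → α) (n : ℕ) : (res x n).length = n :=
  List.length_ofFn

@[simp] lemma res_getElem {α : Type*} (x : ℕ → α) {n i : ℕ} (h : i < (res x n).length) :
    (res x n)[i] = x i := by simp [res]

lemma res_take {α : Type*} (x : ℕ → α) {n m : ℕ} (h : n ≤ m) :
    (res x m).take n = res x n := by
  apply List.ext_getElem
  · simp [h]
  · intro i h1 h2
    simp

lemma res_prefix {α : Type*} (x : ℕ → α) {n m : ℕ} (h : n ≤ m) :
    res x n <+: res x m := by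
  rw [← res_take x h]; exact List.take_prefix _ _

lemma mem_cyl_res {α : Type*} (x : ℕ → α) (n : ℕ) : x ∈ Cyl (res x n) := by
  show res x (res x n).length = res x n
  rw [res_length]

lemma res_of_mem_cyl {α : Type*} {x : ℕ → α} {s : List α} (hx : x ∈ Cyl s) {n : ℕ}
    (h : n ≤ s.length) : res x n = s.take n := by
  have : res x n = (res x s.length).take n := (res_take x h).symm
  rw [this, hx]

lemma cyl_mono {α : Type*} {s t : List α} (h : s <+: t) : Cyl t ⊆ Cyl s := by
  intro x hx
  show res x s.length = s
  rw [res_of_mem_cyl hx h.length_le, ← List.prefix_iff_eq_take.mp h]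

lemma cyl_eq_iInter (s : List Bool) :
    Cyl s = ⋂ i : Fin s.length, {x : ℕ → Bool | x i = s.get i} := by
  ext x
  simp only [mem_iInter, mem_setOf_eq]
  constructor
  · intro h i
    have : (res x s.length)[(i : ℕ)]'(by simp [i.2]) = s[(i : ℕ)] := by
      exact List.getElem_of_eq h _
    simpa using this
  · intro h
    have : res x s.length = List.ofFn s.get := by
      unfold res
      exact congrArg List.ofFn (funext fun i => h i)
    exact (by simpa [List.ofFn_get] using this : res x s.length = s)

lemma measurableSet_cyl (s : List Bool) : MeasurableSet (Cyl s) := by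
  rw [cyl_eq_iInter]
  exact MeasurableSet.iInter fun i =>
    (measurable_pi_apply (i : ℕ)) (MeasurableSet.singleton _)

def Ck {α : Type*} (T : Set (List α)) (n : ℕ) : Set (ℕ → α) := {x | res x n ∈ T}

lemma ck_eq_iUnion (T : Set (List Bool)) (n : ℕ) :
    Ck T n = ⋃ s ∈ {s : List Bool | s ∈ T ∧ s.length = n}, Cyl s := by
  ext x
  simp only [Ck, mem_iUnion, mem_setOf_eq]
  constructor
  · intro h
    exact ⟨res x n, ⟨h, res_length x n⟩, mem_cyl_res x n⟩
  · rintro ⟨s, ⟨hs, hl⟩, hx⟩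
    have : res x n = s := by rw [← hl]; exact hx
    rwa [this]

lemma measurableSet_ck (T : Set (List Bool)) (n : ℕ) : MeasurableSet (Ck T n) := by
  rw [ck_eq_iUnion]
  exact MeasurableSet.biUnion (Set.to_countable _) fun s _ => measurableSet_cyl s

lemma branches_eq_iInter {α : Type*} (T : Set (List α)) : branches T = ⋂ n, Ck T n := by
  ext x; simp [branches, Ck, mem_iInter]

lemma measurableSet_branches (T : Set (List Bool)) : MeasurableSet (branches T) := by
  rw [branches_eq_iInter]; exact MeasurableSet.iInter fun n => measurableSet_ck T n

lemma ck_antitone {T : Set (List Bool)} (hT : IsTree T) : Antitone (Ck T) := by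
  intro n m h x hx
  exact hT _ hx _ (res_prefix x h)

@[simp] lemma cyl_nil {α : Type*} : Cyl ([] : List α) = univ := by
  ext x; simp [Cyl, res]

section Meas
variable {μ : Measure (ℕ → Bool)} (hμ : ∀ s : List Bool, μ (Cyl s) = (1 / 2 : ℝ≥0∞) ^ s.length)

include hμ

lemma cyl_ne_zero (s : List Bool) : μ (Cyl s) ≠ 0 := by
  rw [hμ]; exact pow_ne_zero _ (by norm_num)

lemma cyl_ne_top (s : List Bool) : μ (Cyl s) ≠ ∞ := by
  rw [hμ]; exact ENNReal.pow_ne_top (by norm_num)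

lemma mu_univ_one : μ univ = 1 := by
  have := hμ ([] : List Bool)
  simpa using this

lemma wt_le_one (T : Set (List Bool)) (t : List Bool) : wt μ T t ≤ 1 := by
  rw [wt]
  exact ENNReal.div_le_of_le_mul (by simpa using measure_mono inter_subset_right)

/-- From `wt t < 1 - ε` deduce `ε * μ(Cyl t) ≤ μ (Cyl t \ branches T)`. -/
lemma wt_small (T : Set (List Bool)) {t : List Bool} {ε : ℝ≥0∞} (hε1 : ε ≤ 1)
    (h : wt μ T t < 1 - ε) : ε * μ (Cyl t) ≤ μ (Cyl t \ branches T) := by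
  set c := μ (Cyl t) with hc
  have hc0 : c ≠ 0 := cyl_ne_zero hμ t
  have hctop : c ≠ ∞ := cyl_ne_top hμ t
  have h1 : μ (branches T ∩ Cyl t) ≤ (1 - ε) * c := by
    have := h.le
    rw [wt, ENNReal.div_le_iff hc0 hctop] at this
    exact this
  have h2 : c ≤ μ (branches T ∩ Cyl t) + μ (Cyl t \ branches T) := by
    calc c = μ (Cyl t) := rfl
    _ ≤ μ ((branches T ∩ Cyl t) ∪ (Cyl t \ branches T)) := by
        apply measure_mono; intro x hx
        by_cases hb : x ∈ branches T
        · exact Or.inl ⟨hb, hx⟩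
        · exact Or.inr ⟨hx, hb⟩
    _ ≤ _ := measure_union_le _ _
  have h3 : c ≤ (1 - ε) * c + μ (Cyl t \ branches T) :=
    h2.trans (add_le_add_left h1 _)
  have key : ε * c + (1 - ε) * c = c := by
    rw [← add_mul, add_comm, tsub_add_cancel_of_le hε1, one_mul]
  have hfin : (1 - ε) * c ≠ ∞ := ENNReal.mul_ne_top (by simp [ENNReal.sub_ne_top]) hctop
  calc ε * c = c - (1 - ε) * c := by
        conv_lhs => rw [← ENNReal.add_sub_cancel_right (a := ε * c) hfin]
        rw [key]
  _ ≤ μ (Cyl t \ branches T) := tsub_le_iff_right.mpr (by rwa [add_comm] at h3)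

end Meas

section Stop
variable {μ : Measure (ℕ → Bool)} (hμ : ∀ s : List Bool, μ (Cyl s) = (1 / 2 : ℝ≥0∞) ^ s.length)
include hμ

lemma badset_bound (T : Set (List Bool)) (hT : IsTree T) {ε : ℝ≥0∞} (hε0 : ε ≠ 0)
    (hε1 : ε ≤ 1) (N : ℕ) :
    μ {x | ∃ n, N ≤ n ∧ res x n ∈ T ∧ wt μ T (res x n) < 1 - ε} ≤
      μ (Ck T N \ branches T) / ε := by
  classical
  set Min : Set (List Bool) :=
    {u | u ∈ T ∧ N ≤ u.length ∧ wt μ T u < 1 - ε ∧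
      ∀ m, N ≤ m → m < u.length → ¬(wt μ T (u.take m) < 1 - ε)} with hMin
  -- covering
  have hcov : {x : ℕ → Bool | ∃ n, N ≤ n ∧ res x n ∈ T ∧ wt μ T (res x n) < 1 - ε} ⊆
      ⋃ u ∈ Min, Cyl u := by
    intro x hx
    obtain ⟨n₀, hn₀⟩ := hx
    have hex : ∃ n, N ≤ n ∧ res x n ∈ T ∧ wt μ T (res x n) < 1 - ε := ⟨n₀, hn₀⟩
    set n := Nat.find hex with hn
    obtain ⟨hNn, hTn, hwn⟩ := Nat.find_spec hex
    refine mem_iUnion₂.mpr ⟨res x n, ⟨hTn, ?_, hwn, ?_⟩, mem_cyl_res x n⟩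
    · simp only [res_length]; exact hNn
    · intro m hNm hm
      rw [res_length] at hm
      rw [res_take x hm.le]
      intro hcon
      have hTm : res x m ∈ T := hT _ hTn _ (res_prefix x hm.le)
      exact Nat.find_min hex hm ⟨hNm, hTm, hcon⟩
  -- disjointness
  have hdisj : Min.PairwiseDisjoint (fun u => Cyl u \ branches T) := by
    intro u hu v hv huv
    have key : ∀ u v : List Bool, u ∈ Min → v ∈ Min → u.length < v.length →
        Cyl u ∩ Cyl v = ∅ := by
      intro u v hu hv hlen
      ext x
      simp only [mem_inter_iff, mem_empty_iff_false, iff_false]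
      rintro ⟨hxu, hxv⟩
      have h1 : v.take u.length = u := by
        rw [← res_of_mem_cyl hxv hlen.le, hxu]
      exact hv.2.2.2 u.length hu.2.1 hlen (by rw [h1]; exact hu.2.2.1)
    have : Cyl u ∩ Cyl v = ∅ := by
      rcases lt_trichotomy u.length v.length with h | h | h
      · exact key u v hu hv h
      · ext x
        simp only [mem_inter_iff, mem_empty_iff_false, iff_false]
        rintro ⟨hxu, hxv⟩
        apply huv
        rw [← hxu, ← hxv, h]
      · rw [inter_comm]; exact key v u hv hu h
    apply Disjoint.mono (diff_subset) (diff_subset)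
    exact disjoint_iff_inter_eq_empty.mpr this
  have hcount : Min.Countable := Set.to_countable _
  have hsum : ε * ∑' u : Min, μ (Cyl (u : List Bool)) ≤ μ (Ck T N \ branches T) := by
    rw [ENNReal.tsum_mul_left.symm]
    calc ∑' u : Min, ε * μ (Cyl (u : List Bool))
        ≤ ∑' u : Min, μ (Cyl (u : List Bool) \ branches T) :=
          ENNReal.tsum_le_tsum fun u => wt_small hμ T hε1 u.2.2.2.1
      _ = μ (⋃ u : Min, (Cyl (u : List Bool) \ branches T)) := by
          haveI := hcount.to_subtype
          refine (measure_iUnion ?_ ?_).symm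
          · intro a b hab
            exact hdisj a.2 b.2 (fun h => hab (Subtype.ext h))
          · exact fun u => (measurableSet_cyl _).diff (measurableSet_branches T)
      _ ≤ μ (Ck T N \ branches T) := by
          apply measure_mono
          apply iUnion_subset
          rintro ⟨u, hu⟩
          apply diff_subset_diff_left
          intro x hx
          show res x N ∈ T
          rw [res_of_mem_cyl hx hu.2.1]
          exact hT _ hu.1 _ (List.take_prefix _ _)
  calc μ {x | ∃ n, N ≤ n ∧ res x n ∈ T ∧ wt μ T (res x n) < 1 - ε}
      ≤ μ (⋃ u ∈ Min, Cyl u) := measure_mono hcov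
    _ ≤ ∑' u : Min, μ (Cyl (u : List Bool)) := by
        haveI := hcount.to_subtype
        rw [biUnion_eq_iUnion]
        exact measure_iUnion_le _
    _ ≤ μ (Ck T N \ branches T) / ε := by
        rw [ENNReal.le_div_iff_mul_le (Or.inl hε0) (Or.inl (hε1.trans_lt ENNReal.one_lt_top).ne)]
        rw [mul_comm]
        exact hsum
end Stop

lemma res_zero {α : Type*} (x : ℕ → α) : res x 0 = [] := by simp [res]

lemma res_succ {α : Type*} (x : ℕ → α) (n : ℕ) : res x (n + 1) = res x n ++ [x n] := by
  rw [res, List.ofFn_succ']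
  simp [res, List.concat_eq_append]

section Cont
variable {μ : Measure (ℕ → Bool)} (hμ : ∀ s : List Bool, μ (Cyl s) = (1 / 2 : ℝ≥0∞) ^ s.length)
include hμ

lemma branches_ne_top (T : Set (List Bool)) : μ (branches T) ≠ ∞ := by
  refine ((measure_mono (subset_univ _)).trans_lt ?_).ne
  rw [mu_univ_one hμ]; exact ENNReal.one_lt_top

lemma singleton_null (z : ℕ → Bool) : μ {z} = 0 := by
  have h : ∀ n, μ {z} ≤ (2 : ℝ≥0∞)⁻¹ ^ n := by
    intro n
    calc μ {z} ≤ μ (Cyl (res z n)) := by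
          apply measure_mono
          intro w hw
          rw [mem_singleton_iff] at hw
          subst hw
          exact mem_cyl_res _ n
      _ = (1 / 2 : ℝ≥0∞) ^ (res z n).length := hμ _
      _ = (2 : ℝ≥0∞)⁻¹ ^ n := by rw [res_length, one_div]
  have ht : Tendsto (fun n => (2 : ℝ≥0∞)⁻¹ ^ n) atTop (nhds 0) :=
    ENNReal.tendsto_pow_atTop_nhds_zero_of_lt_one (by
      rw [← ENNReal.one_sub_inv_two]; exact ENNReal.sub_lt_self ENNReal.one_ne_top one_ne_zero
        (by norm_num))
  exact le_zero_iff.mp (ge_of_tendsto' ht h)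

lemma exists_level (T : Set (List Bool)) (hT : IsTree T) {r : ℝ≥0∞} (hr : r ≠ 0) :
    ∃ N, 1 ≤ N ∧ μ (Ck T N \ branches T) ≤ r := by
  have hfin : μ (branches T) ≠ ∞ := branches_ne_top hμ T
  have h0 : μ (Ck T 0) ≠ ∞ := by
    refine ((measure_mono (subset_univ _)).trans_lt ?_).ne
    rw [mu_univ_one hμ]; exact ENNReal.one_lt_top
  have htend : Tendsto (μ ∘ Ck T) atTop (nhds (μ (branches T))) := by
    rw [branches_eq_iInter]
    exact tendsto_measure_iInter_atTop
      (fun n => (measurableSet_ck T n).nullMeasurableSet) (ck_antitone hT) ⟨0, h0⟩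
  have hlt : μ (branches T) < μ (branches T) + r := ENNReal.lt_add_right hfin hr
  obtain ⟨N, hN1, hN2⟩ := ((htend.eventually_lt_const hlt).and (eventually_ge_atTop 1)).exists
  refine ⟨N, hN2, ?_⟩
  have hsub : branches T ⊆ Ck T N := by
    rw [branches_eq_iInter]; exact iInter_subset _ N
  rw [measure_diff hsub (measurableSet_branches T).nullMeasurableSet hfin]
  rw [tsub_le_iff_right, add_comm]
  exact hN1.le

end Cont

lemma tsum_eps : ∑' k : ℕ, (2 : ℝ≥0∞)⁻¹ ^ (k + 1) = 1 := by
  have : ∀ k : ℕ, (2 : ℝ≥0∞)⁻¹ ^ (k + 1) = (2 : ℝ≥0∞)⁻¹ ^ k * 2⁻¹ := fun k => pow_succ _ _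
  rw [tsum_congr this, ENNReal.tsum_mul_right, ENNReal.tsum_geometric, ENNReal.one_sub_inv_two,
    inv_inv]
  exact ENNReal.mul_inv_cancel two_ne_zero ENNReal.ofNat_ne_top

/-- For every tree `T ⊆ 2^{<ω}` with `μ([T]) > 0` and every rational `q ∈ (0,1)`, there
is a perfect subtree `S ⊆ T` all of whose branches are Lebesgue density points of `[T]`
(indeed `lim_n μ([T] ∩ N_{x↾n}) / μ(N_{x↾n}) = 1` for every `x ∈ [S]`) and such that
`μ([S]) ≥ q · μ([T])`. -/
theorem stmt18 (μ : Measure (ℕ → Bool))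
    (hμ : ∀ s : List Bool, μ (Cyl s) = (1 / 2 : ℝ≥0∞) ^ s.length)
    (T : Set (List Bool)) (hT : IsTree T) (hpos : 0 < μ (branches T))
    (q : ℚ) (hq0 : 0 < q) (hq1 : q < 1) :
    ∃ S : Set (List Bool), IsPerfectTree S ∧ S ⊆ T ∧
      (∀ x ∈ branches S,
        Filter.Tendsto (fun n : ℕ => μ (branches T ∩ Cyl (res x n)) / μ (Cyl (res x n)))
          Filter.atTop (nhds 1)) ∧
      ENNReal.ofReal (q : ℝ) * μ (branches T) ≤ μ (branches S) := by
  classical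
  have hmtop : μ (branches T) ≠ ∞ := branches_ne_top hμ T
  set m := μ (branches T) with hm
  have hm0 : m ≠ 0 := hpos.ne'
  set q' := ENNReal.ofReal (q : ℝ) with hq'def
  have hq'1 : q' < 1 := by
    rw [hq'def, ← ENNReal.ofReal_one]
    exact (ENNReal.ofReal_lt_ofReal_iff (by norm_num)).mpr (by exact_mod_cast hq1)
  have hq'0 : q' ≠ 0 := (ENNReal.ofReal_pos.mpr (by exact_mod_cast hq0)).ne'
  set ε : ℕ → ℝ≥0∞ := fun k => (2 : ℝ≥0∞)⁻¹ ^ (k + 1) with hεdef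
  have hhalf0 : (2 : ℝ≥0∞)⁻¹ ≠ 0 := by simp
  have hhalf1 : (2 : ℝ≥0∞)⁻¹ < 1 := by
    rw [← ENNReal.one_sub_inv_two]
    exact ENNReal.sub_lt_self ENNReal.one_ne_top one_ne_zero (by norm_num)
  have hε0 : ∀ k, ε k ≠ 0 := fun k => pow_ne_zero _ hhalf0
  have hε1 : ∀ k, ε k ≤ 1 := fun k => pow_le_one' hhalf1.le _
  have hεtend : Tendsto ε atTop (nhds 0) := by
    have h := ENNReal.tendsto_pow_atTop_nhds_zero_of_lt_one hhalf1
    exact h.comp (tendsto_add_atTop_nat 1)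
  set η : ℕ → ℝ≥0∞ := fun k => (1 - q') * m * ε k with hηdef
  have h1q'0 : (1 : ℝ≥0∞) - q' ≠ 0 := (tsub_pos_of_lt hq'1).ne'
  have hη0 : ∀ k, η k ≠ 0 := fun k => mul_ne_zero (mul_ne_zero h1q'0 hm0) (hε0 k)
  have hsumη : ∑' k, η k ≤ (1 - q') * m := by
    rw [hηdef]
    rw [ENNReal.tsum_mul_left]
    rw [tsum_eps, mul_one]
  -- choose levels
  have hNex : ∀ k, ∃ N, 1 ≤ N ∧ μ (Ck T N \ branches T) ≤ ε k * η k := fun k =>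
    exists_level hμ T hT (mul_ne_zero (hε0 k) (hη0 k))
  choose N hN1 hNle using hNex
  -- the pruned tree
  set S0 : Set (List Bool) :=
    {t | t ∈ T ∧ ∀ n ≤ t.length, ∀ k, N k ≤ n → 1 - ε k ≤ wt μ T (t.take n)} with hS0def
  have hS0T : S0 ⊆ T := fun t ht => ht.1
  have hS0tree : IsTree S0 := by
    intro t ht v hv
    refine ⟨hT _ ht.1 _ hv, ?_⟩
    intro n hn k hk
    have hvt : v = t.take v.length := List.prefix_iff_eq_take.mp hv
    have : v.take n = t.take n := by
      rw [hvt, List.take_take, min_eq_left hn]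
    rw [this]
    exact ht.2 n (hn.trans hv.length_le) k hk
  -- branches of S0
  have hbS0 : ∀ x, x ∈ branches S0 ↔
      x ∈ branches T ∧ ∀ n k, N k ≤ n → 1 - ε k ≤ wt μ T (res x n) := by
    intro x
    constructor
    · intro hx
      refine ⟨fun n => (hx n).1, ?_⟩
      intro n k hk
      have := (hx n).2 n (by rw [res_length]) k hk
      rwa [res_take x le_rfl] at this
    · rintro ⟨hxT, hw⟩
      intro j
      refine ⟨hxT j, ?_⟩
      intro n hn k hk
      rw [res_length] at hn
      rw [res_take x hn]
      exact hw n k hk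
  -- measure of the loss
  have hloss : μ (branches T \ branches S0) ≤ (1 - q') * m := by
    have hsub : branches T \ branches S0 ⊆
        ⋃ k, {x | ∃ n, N k ≤ n ∧ res x n ∈ T ∧ wt μ T (res x n) < 1 - ε k} := by
      intro x hx
      rcases hx with ⟨hxT, hxS0⟩
      rw [hbS0 x] at hxS0
      push_neg at hxS0
      obtain ⟨n, k, hk, hlt⟩ := hxS0 hxT
      exact mem_iUnion.mpr ⟨k, n, hk, hxT n, hlt⟩
    calc μ (branches T \ branches S0)
        ≤ ∑' k, μ {x | ∃ n, N k ≤ n ∧ res x n ∈ T ∧ wt μ T (res x n) < 1 - ε k} :=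
          (measure_mono hsub).trans (measure_iUnion_le _)
      _ ≤ ∑' k, η k := by
          apply ENNReal.tsum_le_tsum
          intro k
          calc μ {x | ∃ n, N k ≤ n ∧ res x n ∈ T ∧ wt μ T (res x n) < 1 - ε k}
              ≤ μ (Ck T (N k) \ branches T) / ε k :=
                badset_bound hμ T hT (hε0 k) (hε1 k) (N k)
            _ ≤ (ε k * η k) / ε k := by
                exact ENNReal.div_le_div_right (hNle k) _
            _ = η k := by
                rw [mul_comm, mul_div_assoc,
                  ENNReal.div_self (hε0 k) ((hε1 k).trans_lt ENNReal.one_lt_top).ne, mul_one]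
      _ ≤ (1 - q') * m := hsumη
  -- lower bound on μ (branches S0)
  have hS0meas : q' * m ≤ μ (branches S0) := by
    have h2 : m ≤ μ (branches S0) + (1 - q') * m := by
      calc m ≤ μ (branches S0 ∪ (branches T \ branches S0)) := by
            apply measure_mono
            intro x hx
            by_cases h : x ∈ branches S0
            · exact Or.inl h
            · exact Or.inr ⟨hx, h⟩
        _ ≤ μ (branches S0) + μ (branches T \ branches S0) := measure_union_le _ _
        _ ≤ μ (branches S0) + (1 - q') * m := add_le_add_right hloss _
    have hfin : (1 - q') * m ≠ ∞ :=
      ENNReal.mul_ne_top (by simp [ENNReal.sub_ne_top]) hmtop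
    have key : q' * m + (1 - q') * m = m := by
      rw [← add_mul, add_tsub_cancel_of_le hq'1.le, one_mul]
    have hq'm : q' * m = m - (1 - q') * m := ENNReal.eq_sub_of_add_eq hfin key
    rw [hq'm]
    exact tsub_le_iff_right.mpr h2
  -- the perfect kernel
  set S : Set (List Bool) := {t | t ∈ S0 ∧ 0 < μ (branches S0 ∩ Cyl t)} with hSdef
  have hSS0 : S ⊆ S0 := fun t ht => ht.1
  have hStree : IsTree S := by
    intro t ht v hv
    refine ⟨hS0tree _ ht.1 _ hv, ?_⟩
    refine lt_of_lt_of_le ht.2 (measure_mono ?_)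
    exact inter_subset_inter_right _ (cyl_mono hv)
  have hbSsub : branches S ⊆ branches S0 := fun x hx n => (hx n).1
  -- branches S and branches S0 agree up to null sets
  have hnull : μ (branches S0 \ branches S) = 0 := by
    have hsub : branches S0 \ branches S ⊆
        ⋃ t ∈ {t : List Bool | μ (branches S0 ∩ Cyl t) = 0}, (branches S0 ∩ Cyl t) := by
      intro x hx
      rcases hx with ⟨hx0, hxS⟩
      have : ∃ j, res x j ∉ S := by
        by_contra h
        push_neg at h
        exact hxS h
      obtain ⟨j, hj⟩ := this
      have hj0 : res x j ∈ S0 := hx0 j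
      have : μ (branches S0 ∩ Cyl (res x j)) = 0 := by
        by_contra h
        exact hj ⟨hj0, pos_iff_ne_zero.mpr h⟩
      exact mem_biUnion this ⟨hx0, mem_cyl_res x j⟩
    have hz : μ (⋃ t ∈ {t : List Bool | μ (branches S0 ∩ Cyl t) = 0},
        (branches S0 ∩ Cyl t)) = 0 :=
      (measure_biUnion_null_iff (Set.to_countable _)).mpr (fun t ht => ht)
    exact le_zero_iff.mp ((measure_mono hsub).trans_eq hz)
  -- branches S has full measure in branches S0
  have hbSmeas : q' * m ≤ μ (branches S) := by
    refine hS0meas.trans ?_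
    calc μ (branches S0) ≤ μ (branches S ∪ (branches S0 \ branches S)) := by
          apply measure_mono
          intro x hx
          by_cases h : x ∈ branches S
          · exact Or.inl h
          · exact Or.inr ⟨hx, h⟩
      _ ≤ μ (branches S) + μ (branches S0 \ branches S) := measure_union_le _ _
      _ = μ (branches S) := by rw [hnull, add_zero]
  have hq'm_pos : (0 : ℝ≥0∞) < q' * m := ENNReal.mul_pos hq'0 hm0
  -- the empty string is in S
  have hnilT : ([] : List Bool) ∈ T := by
    obtain ⟨x, hx⟩ := nonempty_of_measure_ne_zero hpos.ne'
    have := hx 0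
    rwa [res_zero] at this
  have hnilS0 : ([] : List Bool) ∈ S0 := by
    refine ⟨hnilT, ?_⟩
    intro n hn k hk
    simp only [List.length_nil, Nat.le_zero] at hn
    subst hn
    exact absurd hk (by have := hN1 k; omega)
  have hnilS : ([] : List Bool) ∈ S := by
    refine ⟨hnilS0, ?_⟩
    have he : branches S0 ∩ Cyl ([] : List Bool) = branches S0 := by
      rw [cyl_nil, inter_univ]
    rw [he]
    exact lt_of_lt_of_le hq'm_pos hS0meas
  -- splitting nodes
  have hsplit : ∀ s ∈ S, ∃ t ∈ S, s <+: t ∧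
      ∃ a b : Bool, a ≠ b ∧ t ++ [a] ∈ S ∧ t ++ [b] ∈ S := by
    intro s hs
    by_contra hcon
    push_neg at hcon
    have hss : (branches S ∩ Cyl s).Subsingleton := by
      intro x hx y hy
      by_contra hxy
      have hex : ∃ j, x j ≠ y j := by
        by_contra h
        push_neg at h
        exact hxy (funext h)
      set j := Nat.find hex with hj
      have hjspec : x j ≠ y j := Nat.find_spec hex
      have hagree : res x j = res y j := by
        apply List.ext_getElem (by simp)
        intro i h1 h2
        simp only [res_getElem]
        have hij : i < j := by simpa using h1
        by_contra hne
        exact (Nat.find_min hex hij) hne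
      have hsj : s.length ≤ j := by
        by_contra h
        push_neg at h
        apply hjspec
        have e1 := List.getElem_of_eq hx.2 (show j < (res x s.length).length by simpa using h)
        have e2 := List.getElem_of_eq hy.2 (show j < (res y s.length).length by simpa using h)
        rw [res_getElem] at e1 e2
        exact e1.trans e2.symm
      have htS : res x j ∈ S := hx.1 j
      have hst : s <+: res x j := by
        rw [List.prefix_iff_eq_take, res_take x hsj]
        exact hx.2.symm
      have hxj1 : res x (j + 1) ∈ S := hx.1 (j + 1)
      have hyj1 : res y (j + 1) ∈ S := hy.1 (j + 1)
      rw [res_succ] at hxj1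
      rw [res_succ, ← hagree] at hyj1
      exact hcon (res x j) htS hst (x j) (y j) hjspec hxj1 hyj1
    have hz : μ (branches S ∩ Cyl s) = 0 := by
      rcases hss.eq_empty_or_singleton with h | ⟨z, h⟩
      · rw [h, measure_empty]
      · rw [h]
        exact singleton_null hμ z
    have hz0 : μ (branches S0 ∩ Cyl s) = 0 := by
      have hsub2 : branches S0 ∩ Cyl s ⊆
          (branches S ∩ Cyl s) ∪ (branches S0 \ branches S) := by
        rintro x ⟨h1, h2⟩
        by_cases h : x ∈ branches S
        · exact Or.inl ⟨h, h2⟩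
        · exact Or.inr ⟨h1, h⟩
      refine le_zero_iff.mp ((measure_mono hsub2).trans ?_)
      calc μ ((branches S ∩ Cyl s) ∪ (branches S0 \ branches S))
          ≤ μ (branches S ∩ Cyl s) + μ (branches S0 \ branches S) := measure_union_le _ _
        _ = 0 := by rw [hz, hnull, add_zero]
    exact absurd hz0 hs.2.ne'
  -- density
  have hdens : ∀ x ∈ branches S,
      Tendsto (fun n => wt μ T (res x n)) atTop (nhds 1) := by
    intro x hx
    have hx0 := (hbS0 x).mp (hbSsub hx)
    refine tendsto_order.2 ⟨?_, ?_⟩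
    · intro a ha
      have h1a : (0 : ℝ≥0∞) < 1 - a := tsub_pos_of_lt ha
      obtain ⟨k, hk⟩ := (hεtend.eventually_lt_const h1a).exists
      have hεktop : ε k ≠ ∞ := ((hε1 k).trans_lt ENNReal.one_lt_top).ne
      have ha1 : a < 1 - ε k := by
        have h2 : a + ε k < a + (1 - a) :=
          ENNReal.add_lt_add_left (ha.trans ENNReal.one_lt_top).ne hk
        rw [add_tsub_cancel_of_le ha.le] at h2
        exact ((ENNReal.cancel_of_ne hεktop).lt_tsub_iff_right).mpr h2
      filter_upwards [eventually_ge_atTop (N k)] with n hn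
      exact lt_of_lt_of_le ha1 (hx0.2 n k hn)
    · intro a ha
      filter_upwards with n
      exact lt_of_le_of_lt (wt_le_one hμ T (res x n)) ha
  exact ⟨S, ⟨hStree, ⟨[], hnilS⟩, hsplit⟩, fun t ht => hS0T (hSS0 ht),
    fun x hx => hdens x hx, hbSmeas⟩
end
end
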